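/- Let S ⊆ F_2^n be a Sidon set and p ∈ F_2^n \ S. Then the number of points of S adjacent to p in Cay(γ_S) equals 3·mult_S(p), i.e., |(p+S) ∩ (S+S)| = 3·mult_S(p). -/

import Mathlib

open Finset
def dotp {n : ℕ} (a x : Fin n → ZMod 2) : ZMod 2 := ∑ i, a i * x i
def chi {n : ℕ} (a x : Fin n → ZMod 2) : ℤ := (-1 : ℤ) ^ (dotp a x).val
def fourierS {n : ℕ} (S : Finset (Fin n → ZMod 2)) (u : Fin n → ZMod 2) : ℤ :=
  ∑ x ∈ S, chi u x
def IsSidon {n : ℕ} (S : Set (Fin n → ZMod 2)) : Prop :=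
  ∀ a ∈ S, ∀ b ∈ S, ∀ c ∈ S, ∀ d ∈ S,
    a ≠ b → c ≠ d → a + b = c + d → ({a, b} : Set (Fin n → ZMod 2)) = {c, d}
def IsKCover {n : ℕ} (S : Finset (Fin n → ZMod 2)) (k : ℕ) : Prop :=
  0 < k ∧ ∀ p ∉ S,
    {T : Finset (Fin n → ZMod 2) | T ⊆ S ∧ T.card = 3 ∧ ∑ x ∈ T, x = p}.ncard = k
def cayGamma {n : ℕ} (S : Set (Fin n → ZMod 2)) : SimpleGraph (Fin n → ZMod 2) where
  Adj u v := u + v ≠ 0 ∧ ∃ x ∈ S, (u + v) + x ∈ S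
  symm := by constructor; intro u v h; rwa [add_comm v u]
  loopless := by
    constructor
    intro u h
    apply h.1
    funext i
    exact CharTwo.add_self_eq_zero (u i)

/-!
Work in a group of exponent two. For `a ∈ S` and `p ∉ S`, the point `p + a` lies in `S + S`
exactly when `p + a = b + c` with `b, c ∈ S`, i.e. when `a` belongs to a three-element subset
`{a, b, c} ⊆ S` summing to `p` (the condition `p ∉ S` forces `a, b, c` to be distinct). So
`(p + S) ∩ (S + S)` is the translate by `p` of the union of these triples. The Sidon property
makes the triples pairwise disjoint: two triples through `a` have complementary pairs with the
same sum `p + a`, hence equal. The union therefore has `3 · mult_S(p)` points.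
-/

open scoped Pointwise

section ThreeSumReps

variable {G : Type*} [AddCommMonoid G] [DecidableEq G]

/-- `#(threeSumReps S p)` is the paper's `mult_S(p)`. -/
def threeSumReps (S : Finset G) (p : G) : Finset (Finset G) :=
  {T ∈ S.powerset | T.card = 3 ∧ ∑ x ∈ T, x = p}

lemma mem_threeSumReps {S T : Finset G} {p : G} :
    T ∈ threeSumReps S p ↔ T ⊆ S ∧ T.card = 3 ∧ ∑ x ∈ T, x = p := by
  simp [threeSumReps]

lemma setOf_eq_coe_threeSumReps (S : Finset G) (p : G) :
    {T : Finset G | T ⊆ S ∧ T.card = 3 ∧ ∑ x ∈ T, x = p} = ↑(threeSumReps S p) := by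
  ext T
  simp [mem_threeSumReps]

lemma card_erase_of_mem_threeSumReps {S T : Finset G} {p a : G} (hT : T ∈ threeSumReps S p)
    (ha : a ∈ T) : (T.erase a).card = 2 := by
  rw [card_erase_of_mem ha, (mem_threeSumReps.1 hT).2.1]

end ThreeSumReps

section ExponentTwo

variable {G : Type*} [AddCommGroup G] [Module (ZMod 2) G] [DecidableEq G]

lemma sum_erase_of_mem_threeSumReps {S T : Finset G} {p a : G} (hT : T ∈ threeSumReps S p)
    (ha : a ∈ T) : ∑ x ∈ T.erase a, x = p + a := by
  rw [sum_erase_eq_sub ha, (mem_threeSumReps.1 hT).2.2, ZModModule.sub_eq_add]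

lemma add_mem_add_iff_exists_mem_threeSumReps {S : Finset G} {p a : G} (hp : p ∉ S)
    (ha : a ∈ S) : p + a ∈ (S : Set G) + S ↔ ∃ T ∈ threeSumReps S p, a ∈ T := by
  constructor
  · intro hpa
    obtain ⟨b, hb, c, hc, hbc⟩ := Set.mem_add.1 hpa
    rw [mem_coe] at hb hc
    have hb_ne_c : b ≠ c := by
      rintro rfl
      rw [ZModModule.add_self, eq_comm, add_eq_zero_iff_eq_neg, ZModModule.neg_eq_self] at hbc
      exact hp (hbc ▸ ha)
    have ha_ne_b : a ≠ b := by
      rintro rfl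
      rw [add_comm p, add_left_cancel_iff] at hbc
      exact hp (hbc ▸ hc)
    have ha_ne_c : a ≠ c := by
      rintro rfl
      rw [add_right_cancel_iff] at hbc
      exact hp (hbc ▸ hb)
    refine ⟨{a, b, c}, mem_threeSumReps.2 ⟨?_, card_eq_three.2 ⟨a, b, c, ha_ne_b, ha_ne_c,
      hb_ne_c, rfl⟩, ?_⟩, mem_insert_self a _⟩
    · simp [insert_subset_iff, ha, hb, hc]
    · rw [sum_insert (by simp [ha_ne_b, ha_ne_c]), sum_pair hb_ne_c, hbc, add_left_comm,
        ZModModule.add_self, add_zero]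
  · rintro ⟨T, hT, haT⟩
    obtain ⟨b, c, hbc, hpair⟩ := card_eq_two.1 (card_erase_of_mem_threeSumReps hT haT)
    have hTS : T.erase a ⊆ S := (erase_subset a T).trans (mem_threeSumReps.1 hT).1
    rw [hpair, insert_subset_iff, singleton_subset_iff] at hTS
    refine Set.mem_add.2 ⟨b, hTS.1, c, hTS.2, ?_⟩
    rw [← sum_erase_of_mem_threeSumReps hT haT, hpair, sum_pair hbc]

lemma image_add_inter_add_eq_image_biUnion_threeSumReps {S : Finset G} {p : G} (hp : p ∉ S) :
    (fun x => p + x) '' (S : Set G) ∩ (S + S)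
      = (fun x => p + x) '' ↑((threeSumReps S p).biUnion id) := by
  rw [← Set.image_inter_preimage]
  congr 1
  ext a
  simp only [Set.mem_inter_iff, Set.mem_preimage, mem_coe, mem_biUnion, id]
  constructor
  · rintro ⟨ha, hpa⟩
    exact (add_mem_add_iff_exists_mem_threeSumReps hp ha).1 hpa
  · rintro ⟨T, hT, haT⟩
    have ha : a ∈ S := (mem_threeSumReps.1 hT).1 haT
    exact ⟨ha, (add_mem_add_iff_exists_mem_threeSumReps hp ha).2 ⟨T, hT, haT⟩⟩

end ExponentTwo

namespace IsSidon

variable {n : ℕ} {S : Finset (Fin n → ZMod 2)}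

lemma eq_of_card_eq_two_of_sum_eq (hS : IsSidon (S : Set (Fin n → ZMod 2)))
    {U V : Finset (Fin n → ZMod 2)} (hU : U ⊆ S) (hV : V ⊆ S) (hU₂ : U.card = 2)
    (hV₂ : V.card = 2) (h : ∑ x ∈ U, x = ∑ x ∈ V, x) : U = V := by
  obtain ⟨a, b, hab, rfl⟩ := card_eq_two.1 hU₂
  obtain ⟨c, d, hcd, rfl⟩ := card_eq_two.1 hV₂
  rw [insert_subset_iff, singleton_subset_iff] at hU hV
  rw [sum_pair hab, sum_pair hcd] at h
  rw [← coe_inj, coe_pair, coe_pair]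
  exact hS a hU.1 b hU.2 c hV.1 d hV.2 hab hcd h

lemma pairwiseDisjoint_threeSumReps (hS : IsSidon (S : Set (Fin n → ZMod 2)))
    (p : Fin n → ZMod 2) :
    (threeSumReps S p : Set (Finset (Fin n → ZMod 2))).PairwiseDisjoint id := by
  intro T₁ hT₁ T₂ hT₂ hne
  refine disjoint_left.2 fun a (ha₁ : a ∈ T₁) (ha₂ : a ∈ T₂) => hne ?_
  have hS₁ := (mem_threeSumReps.1 hT₁).1
  have hS₂ := (mem_threeSumReps.1 hT₂).1
  have herase : T₁.erase a = T₂.erase a :=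
    hS.eq_of_card_eq_two_of_sum_eq ((erase_subset a T₁).trans hS₁)
      ((erase_subset a T₂).trans hS₂)
      (card_erase_of_mem_threeSumReps hT₁ ha₁) (card_erase_of_mem_threeSumReps hT₂ ha₂)
      (by rw [sum_erase_of_mem_threeSumReps hT₁ ha₁, sum_erase_of_mem_threeSumReps hT₂ ha₂])
  rw [← insert_erase ha₁, ← insert_erase ha₂, herase]

lemma card_biUnion_threeSumReps (hS : IsSidon (S : Set (Fin n → ZMod 2))) (p : Fin n → ZMod 2) :
    ((threeSumReps S p).biUnion id).card = 3 * (threeSumReps S p).card := by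
  rw [card_biUnion (hS.pairwiseDisjoint_threeSumReps p)]
  exact (sum_const_nat fun T hT => (mem_threeSumReps.1 hT).2.1).trans (mul_comm _ _)

end IsSidon

open scoped Pointwise in
theorem stmt14 {n : ℕ} (S : Finset (Fin n → ZMod 2))
    (hS : IsSidon (S : Set (Fin n → ZMod 2))) (p : Fin n → ZMod 2) (hp : p ∉ S) :
    (((fun x => p + x) '' (S : Set (Fin n → ZMod 2)))
        ∩ ((S : Set (Fin n → ZMod 2)) + (S : Set (Fin n → ZMod 2)))).ncard
      = 3 * {T : Finset (Fin n → ZMod 2) | T ⊆ S ∧ T.card = 3 ∧ ∑ x ∈ T, x = p}.ncard := by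
  rw [image_add_inter_add_eq_image_biUnion_threeSumReps hp,
    Set.ncard_image_of_injective _ (add_right_injective p), Set.ncard_coe_finset,
    hS.card_biUnion_threeSumReps, setOf_eq_coe_threeSumReps, Set.ncard_coe_finset]
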